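/- arXiv:math/0309257 — 8 statements merged into one kernel-verified Lean document; each statement's English description precedes it below -/
import Mathlib

section
/- Let A and B be effects on a Hilbert space. Then A ∘ B = B ∘ A (i.e., A^{1/2} B A^{1/2} = B^{1/2} A B^{1/2}) if and only if AB = BA. -/
/-!
If `√A B √A = √B A √B`, then `T = √A √B` is normal, since `T⋆T = √B A √B` and `T T⋆ = √A B √A`.
Its nonzero spectrum is that of the selfadjoint element `A^{1/4} B A^{1/4}`, hence real, and a
normal element with real spectrum is selfadjoint: `√A √B = √B √A`, so `A` and `B` commute.
Conversely, if `A` and `B` commute then `B` commutes with `√A` and `A` with `√B`, and both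
sequential products equal `AB`.
-/

open CFC

lemma isStarNormal_mul_of_conj_eq {R : Type*} [Semigroup R] [StarMul R] {x y : R}
    (hx : IsSelfAdjoint x) (hy : IsSelfAdjoint y) (h : x * (y * y) * x = y * (x * x) * y) :
    IsStarNormal (x * y) := by
  have hstar : star (x * y) = y * x := by rw [star_mul, hx.star_eq, hy.star_eq]
  refine ⟨?_⟩
  rw [Commute, SemiconjBy, hstar]
  calc y * x * (x * y) = y * (x * x) * y := by simp only [mul_assoc]
    _ = x * (y * y) * x := h.symm
    _ = x * y * (y * x) := by simp only [mul_assoc]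

section CStarAlgebra

variable {A : Type*} [CStarAlgebra A] [PartialOrder A] [StarOrderedRing A]

lemma spectrumRestricts_re_mul_of_nonneg {a b : A} (ha : 0 ≤ a) (hb : IsSelfAdjoint b) :
    SpectrumRestricts (a * b) Complex.reCLM := by
  rw [SpectrumRestricts.real_iff]
  intro z hz
  obtain rfl | hz0 := eq_or_ne z 0
  · simp
  have hconj : IsSelfAdjoint (sqrt a * b * sqrt a) :=
    hb.conjugate_self (sqrt_nonneg a).isSelfAdjoint
  have hspec := spectrum.nonzero_mul_comm (𝕜 := ℂ) (sqrt a) (sqrt a * b)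
  rw [← mul_assoc, sqrt_mul_sqrt_self a] at hspec
  have hz' : z ∈ spectrum ℂ (sqrt a * b * sqrt a) \ {0} := hspec ▸ ⟨hz, hz0⟩
  exact hconj.mem_spectrum_eq_re hz'.1

lemma commute_of_isStarNormal_mul {a b : A} (ha : 0 ≤ a) (hb : IsSelfAdjoint b)
    [IsStarNormal (a * b)] : Commute a b := by
  have hab : IsSelfAdjoint (a * b) :=
    QuasispectrumRestricts.isSelfAdjoint _ (spectrumRestricts_re_mul_of_nonneg ha hb)
  have : star (a * b) = b * a := by rw [star_mul, ha.isSelfAdjoint.star_eq, hb.star_eq]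
  exact (this ▸ hab.star_eq).symm

lemma commute_of_sqrt_mul_mul_sqrt_eq {a b : A} (ha : 0 ≤ a) (hb : 0 ≤ b)
    (h : sqrt a * b * sqrt a = sqrt b * a * sqrt b) : Commute a b := by
  have hnormal : IsStarNormal (sqrt a * sqrt b) := by
    refine isStarNormal_mul_of_conj_eq (sqrt_nonneg a).isSelfAdjoint
      (sqrt_nonneg b).isSelfAdjoint ?_
    rwa [sqrt_mul_sqrt_self a, sqrt_mul_sqrt_self b]
  have hsqrt : Commute (sqrt a) (sqrt b) :=
    commute_of_isStarNormal_mul (sqrt_nonneg a) (sqrt_nonneg b).isSelfAdjoint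
  simpa only [sq_sqrt a, sq_sqrt b] using hsqrt.pow_pow 2 2

lemma Commute.sqrt_mul_mul_sqrt {a b : A} (hab : Commute a b) (ha : 0 ≤ a) :
    sqrt a * b * sqrt a = a * b := by
  have hb : Commute (sqrt a) b := by
    rw [sqrt_eq_cfc]
    exact hab.cfc_nnreal _
  rw [hb.eq, mul_assoc, sqrt_mul_sqrt_self a, hab.eq]

end CStarAlgebra

theorem sequentialProduct_comm_iff_commute_general
    {H : Type*} [NormedAddCommGroup H] [InnerProductSpace ℂ H] [CompleteSpace H]
    (A B : H →L[ℂ] H) (hA0 : 0 ≤ A) (hB0 : 0 ≤ B) :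
    CFC.sqrt A * B * CFC.sqrt A = CFC.sqrt B * A * CFC.sqrt B ↔ A * B = B * A := by
  refine ⟨fun h ↦ (commute_of_sqrt_mul_mul_sqrt_eq hA0 hB0 h).eq, fun h ↦ ?_⟩
  rw [Commute.sqrt_mul_mul_sqrt h hA0, Commute.sqrt_mul_mul_sqrt h.symm hB0, h]

/-- Gudder–Nagy: for effects `A, B`, `A ∘ B = B ∘ A` iff `A B = B A`. -/
theorem sequentialProduct_comm_iff_commute
    {H : Type*} [NormedAddCommGroup H] [InnerProductSpace ℂ H] [CompleteSpace H]
    (A B : H →L[ℂ] H) (hA0 : 0 ≤ A) (hA1 : A ≤ 1) (hB0 : 0 ≤ B) (hB1 : B ≤ 1) :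
    CFC.sqrt A * B * CFC.sqrt A = CFC.sqrt B * A * CFC.sqrt B ↔ A * B = B * A :=
  sequentialProduct_comm_iff_commute_general A B hA0 hB0
end

section
/- Let 𝒜, ℬ be unital C*-algebras and φ : E(𝒜) → E(ℬ) an E-isomorphism. Then φ(λA) = λφ(A) for every effect A ∈ E(𝒜) and every real λ ∈ [0,1]. -/
set_option synthInstance.maxHeartbeats 1000000
set_option maxHeartbeats 1000000

/-- The effects of a unital C*-algebra: elements `a` with `0 ≤ a ≤ 1`. -/
def IsEffect {A : Type*} [CStarAlgebra A] [PartialOrder A] [StarOrderedRing A] (a : A) : Prop :=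
  0 ≤ a ∧ a ≤ 1

/-!
Additivity makes `φ` monotone (`φ b = φ a + φ (b - a)`) and `ℚ`-homogeneous, so for every
`n ≥ 1` we get `(⌊l n⌋ / n) • φ a ≤ φ (l • a) ≤ (⌈l n⌉ / n) • φ a`, and both bounds tend
to `l • φ a` because the order of a C*-algebra is closed.
-/

open Filter

section Squeeze

variable {E : Type*} [TopologicalSpace E] [AddCommMonoid E] [Module ℝ E] [ContinuousSMul ℝ E]
  [Preorder E] {l : ℝ} {v x : E}

theorem smul_le_of_forall_floor_div_smul_le [ClosedIicTopology E] (hl : 0 ≤ l)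
    (h : ∀ n : ℕ, 1 ≤ n → ((⌊l * n⌋₊ : ℝ) / n) • v ≤ x) : l • v ≤ x :=
  le_of_tendsto
    (((tendsto_nat_floor_mul_div_atTop hl).comp tendsto_natCast_atTop_atTop).smul_const v)
    (eventually_atTop.2 ⟨1, h⟩)

theorem le_smul_of_forall_le_ceil_div_smul [ClosedIciTopology E] (hl : 0 ≤ l)
    (h : ∀ n : ℕ, 1 ≤ n → x ≤ ((⌈l * n⌉₊ : ℝ) / n) • v) : x ≤ l • v :=
  ge_of_tendsto
    (((tendsto_nat_ceil_mul_div_atTop hl).comp tendsto_natCast_atTop_atTop).smul_const v)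
    (eventually_atTop.2 ⟨1, h⟩)

end Squeeze

section Effects

variable {A B : Type*} [CStarAlgebra A] [PartialOrder A] [StarOrderedRing A]
  [CStarAlgebra B] [PartialOrder B] [StarOrderedRing B]

abbrev Effect (A : Type*) [CStarAlgebra A] [PartialOrder A] [StarOrderedRing A] :=
  {a : A // IsEffect a}

theorem IsEffect.zero : IsEffect (0 : A) := ⟨le_rfl, zero_le_one⟩

theorem IsEffect.of_le {a b : A} (hb : IsEffect b) (ha : 0 ≤ a) (hab : a ≤ b) : IsEffect a :=
  ⟨ha, hab.trans hb.2⟩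

theorem IsEffect.smul {a : A} (ha : IsEffect a) {t : ℝ} (ht₀ : 0 ≤ t) (ht₁ : t ≤ 1) :
    IsEffect (t • a) :=
  ha.of_le (smul_nonneg ht₀ ha.1) <| by
    simpa using smul_le_smul_of_nonneg_right ht₁ ha.1

def EffectAdditive (φ : Effect A → Effect B) : Prop :=
  ∀ (a b : Effect A) (h : IsEffect ((a : A) + b)),
    (φ ⟨(a : A) + b, h⟩ : B) = (φ a : B) + φ b

namespace EffectAdditive

variable {φ : Effect A → Effect B} (hφ : EffectAdditive φ)
include hφ

theorem map_of_add_eq {a b c : Effect A} (h : (a : A) + b = c) : (φ c : B) = φ a + φ b := by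
  obtain ⟨c, hc⟩ := c
  subst h
  exact hφ a b hc

theorem map_zero : (φ ⟨0, IsEffect.zero⟩ : B) = 0 :=
  left_eq_add.mp <|
    hφ.map_of_add_eq (a := ⟨0, IsEffect.zero⟩) (b := ⟨0, IsEffect.zero⟩) (add_zero _)

theorem monotone {a b : Effect A} (hab : (a : A) ≤ b) : (φ a : B) ≤ φ b := by
  let c : Effect A := ⟨b - a, b.2.of_le (sub_nonneg.2 hab) (sub_le_self _ a.2.1)⟩
  rw [hφ.map_of_add_eq (a := a) (b := c) (add_sub_cancel _ _)]
  exact le_add_of_nonneg_right (φ c).2.1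

theorem map_natCast_smul (b : Effect A) (n : ℕ) (h : IsEffect ((n : ℝ) • (b : A))) :
    (φ ⟨(n : ℝ) • (b : A), h⟩ : B) = (n : ℝ) • (φ b : B) := by
  induction n with
  | zero => simpa using hφ.map_zero
  | succ n ih =>
    have hn : IsEffect ((n : ℝ) • (b : A)) :=
      h.of_le (smul_nonneg n.cast_nonneg b.2.1)
        (smul_le_smul_of_nonneg_right (by simp) b.2.1)
    rw [hφ.map_of_add_eq (a := ⟨_, hn⟩) (b := b) (by push_cast; rw [add_smul, one_smul]),
      ih hn]
    push_cast
    rw [add_smul, one_smul]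

theorem map_div_smul (a : Effect A) (m n : ℕ) (hn : 0 < n)
    (h : IsEffect (((m : ℝ) / n) • (a : A))) :
    (φ ⟨((m : ℝ) / n) • (a : A), h⟩ : B) = ((m : ℝ) / n) • (φ a : B) := by
  have hn' : (0 : ℝ) < n := by exact_mod_cast hn
  let b : Effect A := ⟨(1 / (n : ℝ)) • (a : A),
    a.2.smul (by positivity) ((div_le_one hn').2 (by exact_mod_cast hn))⟩
  have hnb : (n : ℝ) • (b : A) = a := by
    simp only [b, smul_smul, mul_one_div_cancel hn'.ne', one_smul]
  have hmb : (m : ℝ) • (b : A) = ((m : ℝ) / n) • (a : A) := by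
    simp only [b, smul_smul, mul_one_div]
  have hφb : (φ b : B) = (1 / (n : ℝ)) • (φ a : B) := by
    have hφa := hφ.map_natCast_smul b n (hnb ▸ a.2)
    simp only [hnb] at hφa
    rw [hφa, smul_smul, one_div_mul_cancel hn'.ne', one_smul]
  have hφm := hφ.map_natCast_smul b m (hmb ▸ h)
  simp only [hmb] at hφm
  rw [hφm, hφb, smul_smul, mul_one_div]

theorem map_smul (a : Effect A) {l : ℝ} (hl₀ : 0 ≤ l) (hl₁ : l ≤ 1)
    (h : IsEffect (l • (a : A))) :
    (φ ⟨l • (a : A), h⟩ : B) = l • (φ a : B) := by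
  refine le_antisymm (le_smul_of_forall_le_ceil_div_smul hl₀ fun n hn => ?_)
    (smul_le_of_forall_floor_div_smul_le hl₀ fun n hn => ?_)
  · have hn' : (0 : ℝ) < n := by exact_mod_cast hn
    have hlr : l ≤ (⌈l * n⌉₊ : ℝ) / n := (le_div_iff₀ hn').2 (Nat.le_ceil _)
    have hr₁ : (⌈l * n⌉₊ : ℝ) / n ≤ 1 :=
      (div_le_one hn').2 (by exact_mod_cast Nat.ceil_le.2 (by nlinarith))
    rw [← hφ.map_div_smul a _ n hn (a.2.smul (hl₀.trans hlr) hr₁)]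
    exact hφ.monotone (smul_le_smul_of_nonneg_right hlr a.2.1)
  · have hn' : (0 : ℝ) < n := by exact_mod_cast hn
    have hql : (⌊l * n⌋₊ : ℝ) / n ≤ l := (div_le_iff₀ hn').2 (Nat.floor_le (by positivity))
    have hle := smul_le_smul_of_nonneg_right hql a.2.1
    have hqE : IsEffect (((⌊l * n⌋₊ : ℝ) / n) • (a : A)) :=
      h.of_le (smul_nonneg (by positivity) a.2.1) hle
    rw [← hφ.map_div_smul a _ n hn hqE]
    exact hφ.monotone hle

end EffectAdditive

end Effects

theorem EIso_real_homogeneous_general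
    {A B : Type*} [CStarAlgebra A] [PartialOrder A] [StarOrderedRing A]
    [CStarAlgebra B] [PartialOrder B] [StarOrderedRing B]
    (φ : {a : A // IsEffect a} → {b : B // IsEffect b})
    (hadd : ∀ (a b : {a : A // IsEffect a}) (h : IsEffect ((a : A) + b)),
      (φ ⟨(a : A) + b, h⟩ : B) = (φ a : B) + φ b) :
    ∀ (a : {a : A // IsEffect a}) (l : ℝ), 0 ≤ l → l ≤ 1 →
      ∀ h : IsEffect (l • (a : A)),
        (φ ⟨l • (a : A), h⟩ : B) = l • (φ a : B) :=
  fun a _ hl₀ hl₁ h => EffectAdditive.map_smul hadd a hl₀ hl₁ h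

/-- An E-isomorphism is homogeneous with respect to real scalars in [0,1]. -/
theorem EIso_real_homogeneous
    {A B : Type*} [CStarAlgebra A] [PartialOrder A] [StarOrderedRing A]
    [CStarAlgebra B] [PartialOrder B] [StarOrderedRing B]
    (φ : {a : A // IsEffect a} → {b : B // IsEffect b})
    (hbij : Function.Bijective φ)
    (hiff : ∀ a b : {a : A // IsEffect a},
      IsEffect ((a : A) + b) ↔ IsEffect ((φ a : B) + φ b))
    (hadd : ∀ (a b : {a : A // IsEffect a}) (h : IsEffect ((a : A) + b)),
      (φ ⟨(a : A) + b, h⟩ : B) = (φ a : B) + φ b) :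
    ∀ (a : {a : A // IsEffect a}) (l : ℝ), 0 ≤ l → l ≤ 1 →
      ∀ h : IsEffect (l • (a : A)),
        (φ ⟨l • (a : A), h⟩ : B) = l • (φ a : B) :=
  EIso_real_homogeneous_general φ hadd
end

section
/- Let X be a compact Hausdorff space and p : X → ℝ a continuous strictly positive function. Then the map φ on E(C(X)) defined by φ(f)(x) = f(x)^{p(x)} (with 0^{p(x)} = 0) is a bijective multiplicative map of E(C(X)) onto itself: φ(fg) = φ(f)φ(g) for all f, g ∈ E(C(X)), and φ is bijective with inverse given by the exponent 1/p. -/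
set_option synthInstance.maxHeartbeats 1000000
set_option maxHeartbeats 1000000

/-- The effects of `C(X)`: continuous real functions with values in `[0,1]`. -/
def IsEffectFn {X : Type*} [TopologicalSpace X] (f : C(X, ℝ)) : Prop :=
  0 ≤ f ∧ f ≤ 1

/-!
Pointwise, `t ↦ t ^ p` is a multiplicative bijection of `[0,1]` with inverse `t ↦ t ^ (1/p)`
when `p > 0`; positivity of the exponent also makes `x ↦ f x ^ p x` continuous at the zeros of `f`.
-/

section EffectRpow

variable {X : Type*} [TopologicalSpace X]

theorem IsEffectFn.apply_nonneg {f : C(X, ℝ)} (hf : IsEffectFn f) (x : X) : 0 ≤ f x :=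
  hf.1 x

theorem IsEffectFn.rpow_apply_mem_Icc {f : C(X, ℝ)} (hf : IsEffectFn f) {t : ℝ} (ht : 0 ≤ t)
    (x : X) : f x ^ t ∈ Set.Icc (0 : ℝ) 1 :=
  ⟨Real.rpow_nonneg (hf.apply_nonneg x) t, Real.rpow_le_one (hf.apply_nonneg x) (hf.2 x) ht⟩

noncomputable def effectRpow (q : C(X, ℝ)) (hq : ∀ x, 0 < q x)
    (f : {f : C(X, ℝ) // IsEffectFn f}) : {f : C(X, ℝ) // IsEffectFn f} :=
  ⟨⟨fun x => (f : C(X, ℝ)) x ^ q x,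
      (f : C(X, ℝ)).continuous.rpow q.continuous fun x => Or.inr (hq x)⟩,
    fun x => (f.2.rpow_apply_mem_Icc (hq x).le x).1,
    fun x => (f.2.rpow_apply_mem_Icc (hq x).le x).2⟩

variable (q r : C(X, ℝ)) (hq : ∀ x, 0 < q x) (hr : ∀ x, 0 < r x)

@[simp]
theorem effectRpow_apply (f : {f : C(X, ℝ) // IsEffectFn f}) (x : X) :
    (effectRpow q hq f : C(X, ℝ)) x = (f : C(X, ℝ)) x ^ q x :=
  rfl

theorem effectRpow_mul (f g : {f : C(X, ℝ) // IsEffectFn f})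
    (h : IsEffectFn ((f : C(X, ℝ)) * (g : C(X, ℝ)))) :
    (effectRpow q hq ⟨(f : C(X, ℝ)) * (g : C(X, ℝ)), h⟩ : C(X, ℝ)) =
      (effectRpow q hq f : C(X, ℝ)) * (effectRpow q hq g : C(X, ℝ)) := by
  ext x
  exact Real.mul_rpow (f.2.apply_nonneg x) (g.2.apply_nonneg x)

theorem leftInverse_effectRpow (hqr : ∀ x, q x * r x = 1) :
    Function.LeftInverse (effectRpow r hr) (effectRpow q hq) := by
  intro f
  ext x
  rw [effectRpow_apply, effectRpow_apply, ← Real.rpow_mul (f.2.apply_nonneg x), hqr x, Real.rpow_one]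

end EffectRpow

theorem pow_p_is_multiplicative_bijection_of_effects_general
    {X : Type*} [TopologicalSpace X]
    (p : C(X, ℝ)) (hp : ∀ x, 0 < p x) :
    ∃ φ ψ : {f : C(X, ℝ) // IsEffectFn f} → {f : C(X, ℝ) // IsEffectFn f},
      (∀ f x, (φ f : C(X, ℝ)) x = (f : C(X, ℝ)) x ^ (p x)) ∧
      (∀ g x, (ψ g : C(X, ℝ)) x = (g : C(X, ℝ)) x ^ (1 / p x)) ∧
      (∀ (f g : {f : C(X, ℝ) // IsEffectFn f})
          (h : IsEffectFn ((f : C(X, ℝ)) * (g : C(X, ℝ)))),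
        (φ ⟨(f : C(X, ℝ)) * (g : C(X, ℝ)), h⟩ : C(X, ℝ)) = (φ f : C(X, ℝ)) * (φ g : C(X, ℝ))) ∧
      Function.Bijective φ ∧ ψ ∘ φ = id ∧ φ ∘ ψ = id := by
  let q : C(X, ℝ) := ⟨fun x => 1 / p x, continuous_const.div p.continuous fun x => (hp x).ne'⟩
  have hq : ∀ x, 0 < q x := fun x => one_div_pos.mpr (hp x)
  have hleft : Function.LeftInverse (effectRpow q hq) (effectRpow p hp) :=
    leftInverse_effectRpow p q hp hq fun x => mul_one_div_cancel (hp x).ne'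
  have hright : Function.RightInverse (effectRpow q hq) (effectRpow p hp) :=
    leftInverse_effectRpow q p hq hp fun x => one_div_mul_cancel (hp x).ne'
  exact ⟨effectRpow p hp, effectRpow q hq, fun _ _ => rfl, fun _ _ => rfl,
    effectRpow_mul p hp, ⟨hleft.injective, hright.surjective⟩,
    hleft.comp_eq_id, hright.comp_eq_id⟩

/-- For a strictly positive continuous `p`, the map `f ↦ f ^ p` is a bijective
multiplicative selfmap of the effects of `C(X)`, with inverse given by exponent `1/p`. -/
theorem pow_p_is_multiplicative_bijection_of_effects
    {X : Type*} [TopologicalSpace X] [CompactSpace X] [T2Space X]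
    (p : C(X, ℝ)) (hp : ∀ x, 0 < p x) :
    ∃ φ ψ : {f : C(X, ℝ) // IsEffectFn f} → {f : C(X, ℝ) // IsEffectFn f},
      (∀ f x, (φ f : C(X, ℝ)) x = (f : C(X, ℝ)) x ^ (p x)) ∧
      (∀ g x, (ψ g : C(X, ℝ)) x = (g : C(X, ℝ)) x ^ (1 / p x)) ∧
      (∀ (f g : {f : C(X, ℝ) // IsEffectFn f})
          (h : IsEffectFn ((f : C(X, ℝ)) * (g : C(X, ℝ)))),
        (φ ⟨(f : C(X, ℝ)) * (g : C(X, ℝ)), h⟩ : C(X, ℝ)) = (φ f : C(X, ℝ)) * (φ g : C(X, ℝ))) ∧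
      Function.Bijective φ ∧ ψ ∘ φ = id ∧ φ ∘ ψ = id :=
  pow_p_is_multiplicative_bijection_of_effects_general p hp
end

section
/- Let X, Y be compact Hausdorff spaces and φ : E(C(X)) → E(C(Y)) a bijective multiplicative map with φ(λ·1) = λ·1 for some λ ∈ (0,1). If f ∈ E(C(X)) is nowhere vanishing, then φ(f) is nowhere vanishing. -/
set_option synthInstance.maxHeartbeats 1000000
set_option maxHeartbeats 1000000

/-- A bijective multiplicative map of effect sets fixing a nontrivial constant maps
nowhere vanishing effects to nowhere vanishing effects. -/
theorem mult_bijection_preserves_nowhere_vanishing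
    {X Y : Type*} [TopologicalSpace X] [CompactSpace X] [T2Space X]
    [TopologicalSpace Y] [CompactSpace Y] [T2Space Y]
    (φ : {f : C(X, ℝ) // IsEffectFn f} → {g : C(Y, ℝ) // IsEffectFn g})
    (hbij : Function.Bijective φ)
    (hmul : ∀ (f g : {f : C(X, ℝ) // IsEffectFn f})
        (h : IsEffectFn ((f : C(X, ℝ)) * (g : C(X, ℝ)))),
      (φ ⟨(f : C(X, ℝ)) * (g : C(X, ℝ)), h⟩ : C(Y, ℝ)) = (φ f : C(Y, ℝ)) * (φ g : C(Y, ℝ)))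
    (l : ℝ) (hl0 : 0 < l) (hl1 : l < 1)
    (hlX : IsEffectFn (ContinuousMap.const X l))
    (hfix : (φ ⟨ContinuousMap.const X l, hlX⟩ : C(Y, ℝ)) = ContinuousMap.const Y l) :
    ∀ f : {f : C(X, ℝ) // IsEffectFn f}, (∀ x, (f : C(X, ℝ)) x ≠ 0) →
      ∀ y, (φ f : C(Y, ℝ)) y ≠ 0 := by

  -- φ fixes all powers of the constant l
  have hpow : ∀ n : ℕ, ∀ h : IsEffectFn (ContinuousMap.const X (l ^ (n + 1))),
      (φ ⟨ContinuousMap.const X (l ^ (n + 1)), h⟩ : C(Y, ℝ)) =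
        ContinuousMap.const Y (l ^ (n + 1)) := by
    intro n
    induction n with
    | zero =>
      intro h
      have he : (⟨ContinuousMap.const X (l ^ (0 + 1)), h⟩ :
          {f : C(X, ℝ) // IsEffectFn f}) = ⟨ContinuousMap.const X l, hlX⟩ := by
        apply Subtype.ext
        ext x
        simp
      rw [he, hfix]
      ext y
      simp
    | succ n ih =>
      intro h
      have hn : IsEffectFn (ContinuousMap.const X (l ^ (n + 1))) := by
        constructor
        · intro x; simp [ContinuousMap.const_apply]; positivity
        · intro x
          simp only [ContinuousMap.const_apply, ContinuousMap.one_apply]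
          exact le_of_lt (pow_lt_one₀ hl0.le hl1 (Nat.succ_ne_zero n))
      have hprod : IsEffectFn (((⟨ContinuousMap.const X l, hlX⟩ :
          {f : C(X, ℝ) // IsEffectFn f}) : C(X, ℝ)) *
          ((⟨ContinuousMap.const X (l ^ (n + 1)), hn⟩ :
            {f : C(X, ℝ) // IsEffectFn f}) : C(X, ℝ))) := by
        constructor
        · intro x
          show (0 : ℝ) ≤ l * l ^ (n + 1)
          positivity
        · intro x
          show l * l ^ (n + 1) ≤ 1
          have := pow_lt_one₀ hl0.le hl1 (Nat.succ_ne_zero (n+1))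
          calc l * l ^ (n + 1) = l ^ (n + 2) := by ring
          _ ≤ 1 := this.le
      have he : (⟨ContinuousMap.const X (l ^ (n + 1 + 1)), h⟩ :
          {f : C(X, ℝ) // IsEffectFn f}) = ⟨_, hprod⟩ := by
        apply Subtype.ext
        ext x
        simp [ContinuousMap.mul_apply]
        ring
      rw [he, hmul _ _ hprod, hfix, ih hn]
      ext y
      simp [ContinuousMap.mul_apply]
      ring
  intro f hf y
  by_cases hX : Nonempty X
  · -- f has a positive minimum ε
    obtain ⟨x0, -, hx0⟩ := isCompact_univ.exists_isMinOn Set.univ_nonempty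
      ((f : C(X, ℝ)).continuous.continuousOn)
    have hfpos : ∀ x, 0 < (f : C(X, ℝ)) x := by
      intro x
      exact lt_of_le_of_ne (f.2.1 x) (Ne.symm (hf x))
    have hε : 0 < (f : C(X, ℝ)) x0 := hfpos x0
    obtain ⟨n, hn⟩ := exists_pow_lt_of_lt_one hε hl1
    have hln : 0 < l ^ (n + 1) := pow_pos hl0 _
    have hlt : ∀ x, l ^ (n + 1) ≤ (f : C(X, ℝ)) x := by
      intro x
      calc l ^ (n + 1) ≤ l ^ n := pow_le_pow_of_le_one hl0.le hl1.le (by omega)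
      _ ≤ (f : C(X, ℝ)) x0 := hn.le
      _ ≤ (f : C(X, ℝ)) x := hx0 (Set.mem_univ x)
    -- define g = l^(n+1) / f
    have hgc : Continuous fun x => l ^ (n + 1) / (f : C(X, ℝ)) x :=
      Continuous.div continuous_const (f : C(X, ℝ)).continuous (fun x => hf x)
    set g : C(X, ℝ) := ⟨fun x => l ^ (n + 1) / (f : C(X, ℝ)) x, hgc⟩ with hg
    have hgE : IsEffectFn g := by
      constructor
      · intro x
        show (0 : ℝ) ≤ l ^ (n + 1) / (f : C(X, ℝ)) x
        exact div_nonneg hln.le (hfpos x).le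
      · intro x
        simp only [hg, ContinuousMap.coe_mk, ContinuousMap.one_apply]
        exact div_le_one_of_le₀ (hlt x) (hfpos x).le
    have hprod : IsEffectFn ((f : C(X, ℝ)) * ((⟨g, hgE⟩ :
        {f : C(X, ℝ) // IsEffectFn f}) : C(X, ℝ))) := by
      constructor
      · intro x
        show (0 : ℝ) ≤ (f : C(X, ℝ)) x * (l ^ (n + 1) / (f : C(X, ℝ)) x)
        exact mul_nonneg (hfpos x).le (div_nonneg hln.le (hfpos x).le)
      · intro x
        show (f : C(X, ℝ)) x * (l ^ (n + 1) / (f : C(X, ℝ)) x) ≤ 1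
        rw [mul_div_cancel₀ _ (hf x)]
        exact le_of_lt (pow_lt_one₀ hl0.le hl1 (Nat.succ_ne_zero n))
    have hEc : IsEffectFn (ContinuousMap.const X (l ^ (n + 1))) := by
      constructor
      · intro x; simp only [ContinuousMap.const_apply, ContinuousMap.zero_apply]; positivity
      · intro x
        simp only [ContinuousMap.const_apply, ContinuousMap.one_apply]
        exact le_of_lt (pow_lt_one₀ hl0.le hl1 (Nat.succ_ne_zero n))
    have he : (⟨ContinuousMap.const X (l ^ (n + 1)), hEc⟩ :
        {f : C(X, ℝ) // IsEffectFn f}) = ⟨_, hprod⟩ := by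
      apply Subtype.ext
      ext x
      show l ^ (n + 1) = (f : C(X, ℝ)) x * (l ^ (n + 1) / (f : C(X, ℝ)) x)
      rw [mul_div_cancel₀ _ (hf x)]
    have key := hpow n hEc
    rw [he, hmul _ _ hprod] at key
    have := congrArg (fun h : C(Y, ℝ) => h y) key
    simp only [ContinuousMap.mul_apply, ContinuousMap.const_apply] at this
    intro h0
    rw [h0, zero_mul] at this
    exact hln.ne this
  · -- X empty: f is the constant l
    have he : f = ⟨ContinuousMap.const X l, hlX⟩ := by
      apply Subtype.ext
      ext x
      exact absurd ⟨x⟩ hX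
    rw [he, hfix]
    simp only [ContinuousMap.const_apply]
    exact hl0.ne'
end

section
/- Let X, Y be compact Hausdorff spaces and φ : E(C(X)) → E(C(Y)) a bijective multiplicative map with φ(λ) = λ for some constant λ ∈ (0,1). Then the map ψ : C(X)⁺ → C(Y)⁺ defined by ψ(h) = −ln φ(exp(−h)) is a well-defined bijection that is additive: ψ(h + k) = ψ(h) + ψ(k) for all nonnegative h, k ∈ C(X). -/
set_option synthInstance.maxHeartbeats 1000000
set_option maxHeartbeats 1000000

/-- Pointwise `exp (-h)` as a continuous map. -/
noncomputable def expNeg {X : Type*} [TopologicalSpace X] (h : C(X, ℝ)) : C(X, ℝ) :=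
  (⟨Real.exp, Real.continuous_exp⟩ : C(ℝ, ℝ)).comp (-h)

lemma expNeg_apply {X : Type*} [TopologicalSpace X] (h : C(X, ℝ)) (x : X) :
    expNeg h x = Real.exp (-(h x)) := rfl

lemma isEffect_mul {X : Type*} [TopologicalSpace X] {f g : C(X, ℝ)}
    (hf : IsEffectFn f) (hg : IsEffectFn g) : IsEffectFn (f * g) := by
  constructor
  · intro x
    exact mul_nonneg (hf.1 x) (hg.1 x)
  · intro x
    exact mul_le_one₀ (hf.2 x) (hg.1 x) (hg.2 x)

lemma isEffect_expNeg {X : Type*} [TopologicalSpace X] {h : C(X, ℝ)} (hh : 0 ≤ h) :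
    IsEffectFn (expNeg h) := by
  constructor
  · intro x
    exact (Real.exp_pos _).le
  · intro x
    simp only [expNeg_apply]
    exact Real.exp_le_one_iff.2 (neg_nonpos.2 (hh x))

lemma isEffect_const {X : Type*} [TopologicalSpace X] {c : ℝ} (h0 : 0 ≤ c) (h1 : c ≤ 1) :
    IsEffectFn (ContinuousMap.const X c) :=
  ⟨fun _ => h0, fun _ => h1⟩

/-- Key lemma: such a `φ` fixes all constants `l ^ n` and hence sends nowhere-vanishing
effects to nowhere-vanishing effects. -/
lemma key_pos
    {X Y : Type*} [TopologicalSpace X] [CompactSpace X] [T2Space X]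
    [TopologicalSpace Y] [CompactSpace Y] [T2Space Y]
    (φ : {f : C(X, ℝ) // IsEffectFn f} → {g : C(Y, ℝ) // IsEffectFn g})
    (hmul : ∀ (f g : {f : C(X, ℝ) // IsEffectFn f})
        (h : IsEffectFn ((f : C(X, ℝ)) * (g : C(X, ℝ)))),
      (φ ⟨(f : C(X, ℝ)) * (g : C(X, ℝ)), h⟩ : C(Y, ℝ)) = (φ f : C(Y, ℝ)) * (φ g : C(Y, ℝ)))
    (l : ℝ) (hl0 : 0 < l) (hl1 : l < 1)
    (hlX : IsEffectFn (ContinuousMap.const X l))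
    (hfix : (φ ⟨ContinuousMap.const X l, hlX⟩ : C(Y, ℝ)) = ContinuousMap.const Y l)
    (f : C(X, ℝ)) (hf : IsEffectFn f) (hpos : ∀ x, 0 < f x) :
    ∀ y, 0 < (φ ⟨f, hf⟩ : C(Y, ℝ)) y := by
  -- φ fixes 1
  have hone : IsEffectFn (1 : C(X, ℝ)) := ⟨fun _ => zero_le_one, fun _ => le_refl 1⟩
  have hφ1 : (φ ⟨(1 : C(X, ℝ)), hone⟩ : C(Y, ℝ)) = 1 := by
    have h11 : (⟨(1 : C(X, ℝ)) * 1, isEffect_mul hone hone⟩ :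
        {f : C(X, ℝ) // IsEffectFn f}) = ⟨1, hone⟩ := by
      apply Subtype.ext; simp
    have h1l : (⟨(1 : C(X, ℝ)) * ContinuousMap.const X l, isEffect_mul hone hlX⟩ :
        {f : C(X, ℝ) // IsEffectFn f}) = ⟨ContinuousMap.const X l, hlX⟩ := by
      apply Subtype.ext; simp
    have e1 := hmul ⟨1, hone⟩ ⟨ContinuousMap.const X l, hlX⟩ (isEffect_mul hone hlX)
    rw [h1l, hfix] at e1
    ext y
    have := congrFun (congrArg DFunLike.coe e1) y
    simp only [ContinuousMap.mul_apply, ContinuousMap.const_apply] at this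
    have hy : (φ ⟨(1 : C(X, ℝ)), hone⟩ : C(Y, ℝ)) y = 1 := by
      have hl' : l ≠ 0 := ne_of_gt hl0
      field_simp at this
      nlinarith [this]
    simpa using hy
  -- φ fixes const (l ^ n)
  have hpow : ∀ n : ℕ, ∀ (hn : IsEffectFn (ContinuousMap.const X (l ^ n))),
      (φ ⟨ContinuousMap.const X (l ^ n), hn⟩ : C(Y, ℝ)) = ContinuousMap.const Y (l ^ n) := by
    intro n
    induction n with
    | zero =>
      intro hn
      have : (⟨ContinuousMap.const X (l ^ 0), hn⟩ : {f : C(X, ℝ) // IsEffectFn f})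
          = ⟨1, hone⟩ := by
        apply Subtype.ext; ext x; simp
      rw [this, hφ1]; ext y; simp
    | succ n ih =>
      intro hn
      have hln : IsEffectFn (ContinuousMap.const X (l ^ n)) :=
        isEffect_const (pow_nonneg hl0.le n) (pow_le_one₀ hl0.le hl1.le)
      have hprod : (⟨(ContinuousMap.const X (l ^ n) : C(X, ℝ)) * ContinuousMap.const X l,
          isEffect_mul hln hlX⟩ : {f : C(X, ℝ) // IsEffectFn f})
          = ⟨ContinuousMap.const X (l ^ (n + 1)), hn⟩ := by
        apply Subtype.ext; ext x; simp [pow_succ]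
      have e := hmul ⟨ContinuousMap.const X (l ^ n), hln⟩ ⟨ContinuousMap.const X l, hlX⟩
        (isEffect_mul hln hlX)
      rw [hprod, ih hln, hfix] at e
      rw [e]; ext y; simp [pow_succ]
  -- f is bounded below by a positive constant
  have hc : ∃ c : ℝ, 0 < c ∧ ∀ x, c ≤ f x := by
    rcases isEmpty_or_nonempty X with hX | hX
    · exact ⟨1, one_pos, fun x => isEmptyElim x⟩
    · obtain ⟨x₀, -, hx₀⟩ :=
        isCompact_univ.exists_isMinOn Set.univ_nonempty f.continuous.continuousOn
      exact ⟨f x₀, hpos x₀, fun x => isMinOn_iff.1 hx₀ x (Set.mem_univ x)⟩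
  obtain ⟨c, hc0, hcf⟩ := hc
  obtain ⟨n, hn⟩ := exists_pow_lt_of_lt_one hc0 hl1
  have hlnf : ∀ x, l ^ n ≤ f x := fun x => le_trans hn.le (hcf x)
  have hlnpos : (0 : ℝ) < l ^ n := pow_pos hl0 n
  -- the complementary effect g with f * g = const (l ^ n)
  set g : C(X, ℝ) := ⟨fun x => l ^ n / f x,
    Continuous.div continuous_const f.continuous (fun x => (hpos x).ne')⟩ with hg_def
  have hg : IsEffectFn g := by
    constructor
    · intro x
      exact div_nonneg hlnpos.le (hpos x).le
    · intro x
      exact (div_le_one (hpos x)).2 (hlnf x)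
  have hfg : (⟨f * g, isEffect_mul hf hg⟩ : {f : C(X, ℝ) // IsEffectFn f})
      = ⟨ContinuousMap.const X (l ^ n),
        isEffect_const hlnpos.le (pow_le_one₀ hl0.le hl1.le)⟩ := by
    apply Subtype.ext
    ext x
    simp only [ContinuousMap.mul_apply, ContinuousMap.const_apply, hg_def,
      ContinuousMap.coe_mk]
    rw [mul_comm, div_mul_eq_mul_div, mul_div_assoc, div_self (hpos x).ne', mul_one]
  have e := hmul ⟨f, hf⟩ ⟨g, hg⟩ (isEffect_mul hf hg)
  rw [hfg, hpow n _] at e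
  intro y
  have := congrFun (congrArg DFunLike.coe e) y
  simp only [ContinuousMap.mul_apply, ContinuousMap.const_apply] at this
  have h1 : (φ ⟨f, hf⟩ : C(Y, ℝ)) y ≠ 0 := by
    intro h0
    rw [h0, zero_mul] at this
    exact hlnpos.ne' this
  exact lt_of_le_of_ne ((φ ⟨f, hf⟩).2.1 y) (Ne.symm h1)

/-- For a bijective multiplicative map of effect sets fixing a nontrivial constant,
`ψ(h) = -ln φ(exp (-h))` is a well-defined additive bijection of the nonnegative cones. -/
theorem neg_log_comp_exp_neg_is_additive_bijection
    {X Y : Type*} [TopologicalSpace X] [CompactSpace X] [T2Space X]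
    [TopologicalSpace Y] [CompactSpace Y] [T2Space Y]
    (φ : {f : C(X, ℝ) // IsEffectFn f} → {g : C(Y, ℝ) // IsEffectFn g})
    (hbij : Function.Bijective φ)
    (hmul : ∀ (f g : {f : C(X, ℝ) // IsEffectFn f})
        (h : IsEffectFn ((f : C(X, ℝ)) * (g : C(X, ℝ)))),
      (φ ⟨(f : C(X, ℝ)) * (g : C(X, ℝ)), h⟩ : C(Y, ℝ)) = (φ f : C(Y, ℝ)) * (φ g : C(Y, ℝ)))
    (l : ℝ) (hl0 : 0 < l) (hl1 : l < 1)
    (hlX : IsEffectFn (ContinuousMap.const X l))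
    (hfix : (φ ⟨ContinuousMap.const X l, hlX⟩ : C(Y, ℝ)) = ContinuousMap.const Y l) :
    ∃ ψ : {h : C(X, ℝ) // 0 ≤ h} → {k : C(Y, ℝ) // 0 ≤ k},
      Function.Bijective ψ ∧
      (∀ (h : {h : C(X, ℝ) // 0 ≤ h}) (hm : IsEffectFn (expNeg (h : C(X, ℝ)))) (y : Y),
        (ψ h : C(Y, ℝ)) y = - Real.log ((φ ⟨expNeg (h : C(X, ℝ)), hm⟩ : C(Y, ℝ)) y)) ∧
      (∀ h k : {h : C(X, ℝ) // 0 ≤ h},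
        (ψ ⟨(h : C(X, ℝ)) + (k : C(X, ℝ)), add_nonneg h.2 k.2⟩ : C(Y, ℝ))
          = (ψ h : C(Y, ℝ)) + (ψ k : C(Y, ℝ))) := by
  classical
  -- the inverse of φ
  let φe : {f : C(X, ℝ) // IsEffectFn f} ≃ {g : C(Y, ℝ) // IsEffectFn g} :=
    Equiv.ofBijective φ hbij
  have hφe : ∀ f, φe f = φ f := fun _ => rfl
  -- inverse is multiplicative
  have hmul' : ∀ (a b : {g : C(Y, ℝ) // IsEffectFn g})
      (h : IsEffectFn ((a : C(Y, ℝ)) * (b : C(Y, ℝ)))),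
      (φe.symm ⟨(a : C(Y, ℝ)) * (b : C(Y, ℝ)), h⟩ : C(X, ℝ))
        = (φe.symm a : C(X, ℝ)) * (φe.symm b : C(X, ℝ)) := by
    intro a b h
    have hab : IsEffectFn ((φe.symm a : C(X, ℝ)) * (φe.symm b : C(X, ℝ))) :=
      isEffect_mul (φe.symm a).2 (φe.symm b).2
    have : φ ⟨(φe.symm a : C(X, ℝ)) * (φe.symm b : C(X, ℝ)), hab⟩
        = ⟨(a : C(Y, ℝ)) * (b : C(Y, ℝ)), h⟩ := by
      apply Subtype.ext
      rw [hmul (φe.symm a) (φe.symm b) hab]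
      have ha : (φ (φe.symm a) : C(Y, ℝ)) = (a : C(Y, ℝ)) := by
        rw [← hφe, Equiv.apply_symm_apply]
      have hb : (φ (φe.symm b) : C(Y, ℝ)) = (b : C(Y, ℝ)) := by
        rw [← hφe, Equiv.apply_symm_apply]
      rw [ha, hb]
    have := congrArg φe.symm this
    rw [show φ ⟨(φe.symm a : C(X, ℝ)) * (φe.symm b : C(X, ℝ)), hab⟩
        = φe ⟨(φe.symm a : C(X, ℝ)) * (φe.symm b : C(X, ℝ)), hab⟩ from rfl,
      Equiv.symm_apply_apply] at this
    rw [← this]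
  -- inverse fixes const l
  have hlY : IsEffectFn (ContinuousMap.const Y l) := isEffect_const hl0.le hl1.le
  have hfix' : (φe.symm ⟨ContinuousMap.const Y l, hlY⟩ : C(X, ℝ)) = ContinuousMap.const X l := by
    have : φe ⟨ContinuousMap.const X l, hlX⟩ = ⟨ContinuousMap.const Y l, hlY⟩ :=
      Subtype.ext hfix
    have := congrArg φe.symm this
    rw [Equiv.symm_apply_apply] at this
    rw [← this]
  -- effects below φ
  have keyφ := key_pos φ hmul l hl0 hl1 hlX hfix
  have keyφ' := key_pos φe.symm hmul' l hl0 hl1 hlY hfix'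
  -- the positive image maps
  have hEff : ∀ h : {h : C(X, ℝ) // 0 ≤ h}, IsEffectFn (expNeg (h : C(X, ℝ))) :=
    fun h => isEffect_expNeg h.2
  set F : {h : C(X, ℝ) // 0 ≤ h} → {f : C(X, ℝ) // IsEffectFn f} :=
    fun h => ⟨expNeg (h : C(X, ℝ)), hEff h⟩ with hF_def
  have hFpos : ∀ (h : {h : C(X, ℝ) // 0 ≤ h}) (y : Y), 0 < (φ (F h) : C(Y, ℝ)) y := by
    intro h y
    exact keyφ (expNeg (h : C(X, ℝ))) (hEff h) (fun x => Real.exp_pos _) y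
  -- define ψ
  set ψ : {h : C(X, ℝ) // 0 ≤ h} → {k : C(Y, ℝ) // 0 ≤ k} := fun h =>
    ⟨⟨fun y => - Real.log ((φ (F h) : C(Y, ℝ)) y),
      (Continuous.log (φ (F h) : C(Y, ℝ)).continuous
        (fun y => (hFpos h y).ne')).neg⟩,
      fun y => by
        have h1 := Real.log_nonpos (hFpos h y).le ((φ (F h)).2.2 y)
        simpa using neg_nonneg.2 h1⟩ with hψ_def
  have hψ_apply : ∀ (h : {h : C(X, ℝ) // 0 ≤ h}) (y : Y),
      (ψ h : C(Y, ℝ)) y = - Real.log ((φ (F h) : C(Y, ℝ)) y) := fun _ _ => rfl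
  refine ⟨ψ, ⟨?_, ?_⟩, ?_, ?_⟩
  · -- injective
    intro h h' hhh
    have hval : ∀ y, (φ (F h) : C(Y, ℝ)) y = (φ (F h') : C(Y, ℝ)) y := by
      intro y
      have := congrFun (congrArg (fun k : {k : C(Y, ℝ) // 0 ≤ k} =>
        (DFunLike.coe (k : C(Y, ℝ)))) hhh) y
      simp only [hψ_apply] at this
      have hlog : Real.log ((φ (F h) : C(Y, ℝ)) y) = Real.log ((φ (F h') : C(Y, ℝ)) y) := by
        linarith [this]
      calc (φ (F h) : C(Y, ℝ)) y = Real.exp (Real.log ((φ (F h) : C(Y, ℝ)) y)) :=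
            (Real.exp_log (hFpos h y)).symm
        _ = Real.exp (Real.log ((φ (F h') : C(Y, ℝ)) y)) := by rw [hlog]
        _ = (φ (F h') : C(Y, ℝ)) y := Real.exp_log (hFpos h' y)
    have hφF : φ (F h) = φ (F h') := Subtype.ext (ContinuousMap.ext hval)
    have hFF : F h = F h' := hbij.1 hφF
    have : expNeg (h : C(X, ℝ)) = expNeg (h' : C(X, ℝ)) := congrArg Subtype.val hFF
    apply Subtype.ext
    ext x
    have := congrFun (congrArg DFunLike.coe this) x
    simp only [expNeg_apply] at this
    have := Real.exp_injective this
    linarith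
  · -- surjective
    intro k
    set gY : {g : C(Y, ℝ) // IsEffectFn g} := ⟨expNeg (k : C(Y, ℝ)), isEffect_expNeg k.2⟩
    set fX : {f : C(X, ℝ) // IsEffectFn f} := φe.symm gY with hfX_def
    have hfXpos : ∀ x, 0 < (fX : C(X, ℝ)) x := by
      intro x
      have := keyφ' (expNeg (k : C(Y, ℝ))) (isEffect_expNeg k.2) (fun y => Real.exp_pos _) x
      exact this
    set h : C(X, ℝ) := ⟨fun x => - Real.log ((fX : C(X, ℝ)) x),
      (Continuous.log (fX : C(X, ℝ)).continuous (fun x => (hfXpos x).ne')).neg⟩ with hh_def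
    have hh0 : (0 : C(X, ℝ)) ≤ h := by
      intro x
      have h1 := Real.log_nonpos (hfXpos x).le (fX.2.2 x)
      simpa [hh_def] using neg_nonneg.2 h1
    refine ⟨⟨h, hh0⟩, ?_⟩
    have hFh : F ⟨h, hh0⟩ = fX := by
      apply Subtype.ext
      ext x
      simp only [hF_def, expNeg_apply, hh_def, ContinuousMap.coe_mk, neg_neg]
      exact Real.exp_log (hfXpos x)
    apply Subtype.ext
    ext y
    rw [hψ_apply, hFh]
    have : φ fX = gY := by
      rw [hfX_def, show φ (φe.symm gY) = φe (φe.symm gY) from rfl, Equiv.apply_symm_apply]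
    rw [this]
    simp only [gY, expNeg_apply]
    rw [Real.log_exp]
    ring
  · -- the defining formula
    intro h hm y
    rw [hψ_apply]
  · -- additivity
    intro h k
    ext y
    have hFsum : F ⟨(h : C(X, ℝ)) + (k : C(X, ℝ)), add_nonneg h.2 k.2⟩
        = ⟨(F h : C(X, ℝ)) * (F k : C(X, ℝ)), isEffect_mul (F h).2 (F k).2⟩ := by
      apply Subtype.ext
      ext x
      simp only [hF_def, expNeg_apply, ContinuousMap.mul_apply, ContinuousMap.add_apply,
        neg_add, Real.exp_add]
    rw [ContinuousMap.add_apply, hψ_apply, hψ_apply, hψ_apply, hFsum,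
      hmul (F h) (F k) (isEffect_mul (F h).2 (F k).2)]
    rw [ContinuousMap.mul_apply,
      Real.log_mul (hFpos h y).ne' (hFpos k y).ne']
    ring
end

section
/- Let φ : E(𝒜) → E(ℬ) be a sequential isomorphism between the effect sets of von Neumann algebras (a bijection with φ(A^{1/2} B A^{1/2}) = φ(A)^{1/2} φ(B) φ(A)^{1/2}). Then φ maps projections to projections, and for projections P, Q ∈ 𝒜: P ≤ Q ⟺ φ(P) ≤ φ(Q), and PQ = 0 ⟺ φ(P)φ(Q) = 0. In particular φ(0) = 0 and φ(1) = 1. -/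
/-!
All the notions involved can be read off the sequential product `a ∘ b = √a b √a` alone:
a positive `a` is a projection iff `a ∘ a = a`, for projections `p ≤ q` iff `q ∘ p = p` and
`p q = 0` iff `p ∘ q = 0`, while `0 ∘ b = 0` and `1 ∘ b = b` for every `b`. A map preserving
`∘` transports these relations, and injectivity lets it reflect them, because for a projection
`p` the product `p ∘ b = p b p` is again an effect. For `0` and `1`, surjectivity supplies `b`
with `φ b = 0` (resp. `φ b = 1`), whence `φ 0 = φ 0 ∘ 0 = 0` and `φ 1 = φ 1 ∘ 1 = 1`.
-/

set_option synthInstance.maxHeartbeats 1000000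
set_option maxHeartbeats 1000000

/-- The effects of a von Neumann algebra `M`: elements `a` of `M` with `0 ≤ a ≤ 1`
in the Loewner order. -/
def IsVNEffect {H : Type*} [NormedAddCommGroup H] [InnerProductSpace ℂ H] [CompleteSpace H]
    (M : VonNeumannAlgebra H) (a : H →L[ℂ] H) : Prop :=
  a ∈ M ∧ 0 ≤ a ∧ a ≤ 1

/-- A projection: a self-adjoint idempotent operator. -/
def IsProjOp {H : Type*} [NormedAddCommGroup H] [InnerProductSpace ℂ H] [CompleteSpace H]
    (p : H →L[ℂ] H) : Prop :=
  IsSelfAdjoint p ∧ p * p = p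

open CFC

section SeqProd

variable {A : Type*} [CStarAlgebra A] [PartialOrder A] [StarOrderedRing A]

noncomputable def seqProd (a b : A) : A :=
  sqrt a * b * sqrt a

@[simp]
lemma seqProd_zero_left (b : A) : seqProd 0 b = 0 := by
  simp [seqProd]

@[simp]
lemma seqProd_zero_right (a : A) : seqProd a 0 = 0 := by
  simp [seqProd]

@[simp]
lemma seqProd_one_left (b : A) : seqProd 1 b = b := by
  simp [seqProd, sqrt_one]

lemma seqProd_one_right {a : A} (ha : 0 ≤ a) : seqProd a 1 = a := by
  rw [seqProd, mul_one, sqrt_mul_sqrt_self a ha]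

lemma seqProd_self {a : A} (ha : 0 ≤ a) : seqProd a a = a * a := by
  have h := sqrt_mul_sqrt_self a ha
  calc seqProd a a = (sqrt a * sqrt a) * (sqrt a * sqrt a) := by
        rw [seqProd]; nth_rw 2 [← h]; noncomm_ring
    _ = a * a := by rw [h]

lemma IsStarProjection.sqrt_eq {p : A} (hp : IsStarProjection p) : sqrt p = p :=
  sqrt_unique hp.isIdempotentElem hp.nonneg

lemma IsStarProjection.seqProd_eq {p : A} (hp : IsStarProjection p) (b : A) :
    seqProd p b = p * b * p := by
  rw [seqProd, hp.sqrt_eq]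

lemma isStarProjection_iff_seqProd_self {a : A} (ha : 0 ≤ a) :
    IsStarProjection a ↔ seqProd a a = a := by
  rw [seqProd_self ha]
  exact ⟨fun h ↦ h.isIdempotentElem, fun h ↦ ⟨h, IsSelfAdjoint.of_nonneg ha⟩⟩

lemma IsStarProjection.le_iff_seqProd_eq {p q : A} (hp : IsStarProjection p)
    (hq : IsStarProjection q) : p ≤ q ↔ seqProd q p = p := by
  rw [hp.le_iff_mul_eq_right hq, hq.seqProd_eq]
  constructor
  · intro hqp
    rw [mul_assoc, (hp.le_iff_mul_eq_left hq).mp ((hp.le_iff_mul_eq_right hq).mpr hqp), hqp]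
  · intro hqpq
    rw [← hqpq, ← mul_assoc, ← mul_assoc, hq.isIdempotentElem.eq]

lemma IsStarProjection.mul_eq_zero_iff_seqProd_eq_zero {p q : A} (hp : IsStarProjection p)
    (hq : IsStarProjection q) : p * q = 0 ↔ seqProd p q = 0 := by
  rw [hp.seqProd_eq]
  refine ⟨fun h ↦ by rw [h, zero_mul], fun h ↦ ?_⟩
  -- `p q p = (q p)⋆ (q p)`, and the C⋆-identity forces `q p = 0`.
  have hqp : q * p = 0 := by
    rw [← CStarRing.star_mul_self_eq_zero_iff, star_mul, hp.isSelfAdjoint.star_eq,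
      hq.isSelfAdjoint.star_eq, mul_assoc, ← mul_assoc q, hq.isIdempotentElem.eq, ← mul_assoc,
      h]
  simpa [hp.isSelfAdjoint.star_eq, hq.isSelfAdjoint.star_eq] using congr(star $hqp)

end SeqProd

section Effects

variable {H : Type*} [NormedAddCommGroup H] [InnerProductSpace ℂ H] [CompleteSpace H]

lemma isProjOp_iff_isStarProjection {p : H →L[ℂ] H} : IsProjOp p ↔ IsStarProjection p :=
  ⟨fun h ↦ ⟨h.2, h.1⟩, fun h ↦ ⟨h.isSelfAdjoint, h.isIdempotentElem⟩⟩

lemma IsVNEffect.zero (M : VonNeumannAlgebra H) : IsVNEffect M 0 :=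
  ⟨zero_mem M, le_rfl, zero_le_one⟩

lemma IsVNEffect.one (M : VonNeumannAlgebra H) : IsVNEffect M 1 :=
  ⟨one_mem M, zero_le_one, le_rfl⟩

lemma IsVNEffect.seqProd_of_isStarProjection {M : VonNeumannAlgebra H} {p b : H →L[ℂ] H}
    (hpM : IsVNEffect M p) (hp : IsStarProjection p) (hb : IsVNEffect M b) :
    IsVNEffect M (seqProd p b) := by
  have hconj : ∀ {x y : H →L[ℂ] H}, x ≤ y → p * x * p ≤ p * y * p := fun hxy ↦ by
    simpa only [hp.isSelfAdjoint.star_eq] using star_left_conjugate_le_conjugate hxy p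
  rw [hp.seqProd_eq]
  refine ⟨mul_mem (mul_mem hpM.1 hb.1) hpM.1, by simpa using hconj hb.2.1, ?_⟩
  calc p * b * p ≤ p * 1 * p := hconj hb.2.2
    _ = p := by rw [mul_one, hp.isIdempotentElem.eq]
    _ ≤ 1 := hpM.2.2

variable {K : Type*} [NormedAddCommGroup K] [InnerProductSpace ℂ K] [CompleteSpace K]
  {M : VonNeumannAlgebra H} {N : VonNeumannAlgebra K}

abbrev VNEffect (M : VonNeumannAlgebra H) : Type _ :=
  {a : H →L[ℂ] H // IsVNEffect M a}

def PreservesSeqProd (φ : VNEffect M → VNEffect N) : Prop :=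
  ∀ (a b : VNEffect M) (h : IsVNEffect M (seqProd a.1 b.1)),
    (φ ⟨seqProd a.1 b.1, h⟩).1 = seqProd (φ a).1 (φ b).1

namespace PreservesSeqProd

variable {φ : VNEffect M → VNEffect N}

lemma map_eq_seqProd (hφ : PreservesSeqProd φ) {a b c : VNEffect M}
    (h : seqProd a.1 b.1 = c.1) : (φ c).1 = seqProd (φ a).1 (φ b).1 := by
  obtain ⟨c, hc⟩ := c
  subst h
  exact hφ a b hc

lemma seqProd_eq_iff (hφ : PreservesSeqProd φ) (hinj : Function.Injective φ)
    {a b c : VNEffect M} (hab : IsVNEffect M (seqProd a.1 b.1)) :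
    seqProd a.1 b.1 = c.1 ↔ seqProd (φ a).1 (φ b).1 = (φ c).1 := by
  refine ⟨fun h ↦ (hφ.map_eq_seqProd h).symm, fun h ↦ ?_⟩
  have hφab : φ ⟨seqProd a.1 b.1, hab⟩ = φ c := Subtype.ext ((hφ a b hab).trans h)
  exact congrArg Subtype.val (hinj hφab)

lemma map_isStarProjection (hφ : PreservesSeqProd φ) {p : VNEffect M}
    (hp : IsStarProjection p.1) : IsStarProjection (φ p).1 :=
  (isStarProjection_iff_seqProd_self (φ p).2.2.1).mpr
    (hφ.map_eq_seqProd ((isStarProjection_iff_seqProd_self p.2.2.1).mp hp)).symm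

lemma map_zero (hφ : PreservesSeqProd φ) (hsurj : Function.Surjective φ)
    (h0 : IsVNEffect M 0) : (φ ⟨0, h0⟩).1 = 0 := by
  obtain ⟨b, hb⟩ := hsurj ⟨0, IsVNEffect.zero N⟩
  rw [hφ.map_eq_seqProd (a := ⟨0, h0⟩) (b := b) (seqProd_zero_left _), hb, seqProd_zero_right]

lemma map_one (hφ : PreservesSeqProd φ) (hsurj : Function.Surjective φ)
    (h1 : IsVNEffect M 1) : (φ ⟨1, h1⟩).1 = 1 := by
  obtain ⟨b, hb⟩ := hsurj ⟨1, IsVNEffect.one N⟩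
  have hφb : (φ b).1 = seqProd (φ ⟨1, h1⟩).1 (φ b).1 :=
    hφ.map_eq_seqProd (seqProd_one_left _)
  rwa [hb, seqProd_one_right (φ ⟨1, h1⟩).2.2.1, eq_comm] at hφb

lemma le_iff_of_isStarProjection (hφ : PreservesSeqProd φ) (hinj : Function.Injective φ)
    {p q : VNEffect M} (hp : IsStarProjection p.1) (hq : IsStarProjection q.1) :
    p.1 ≤ q.1 ↔ (φ p).1 ≤ (φ q).1 := by
  rw [hp.le_iff_seqProd_eq hq, (hφ.map_isStarProjection hp).le_iff_seqProd_eq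
    (hφ.map_isStarProjection hq), hφ.seqProd_eq_iff hinj (q.2.seqProd_of_isStarProjection hq p.2)]

lemma mul_eq_zero_iff_of_isStarProjection (hφ : PreservesSeqProd φ) (hbij : Function.Bijective φ)
    {p q : VNEffect M} (hp : IsStarProjection p.1) (hq : IsStarProjection q.1) :
    p.1 * q.1 = 0 ↔ (φ p).1 * (φ q).1 = 0 := by
  rw [hp.mul_eq_zero_iff_seqProd_eq_zero hq,
    (hφ.map_isStarProjection hp).mul_eq_zero_iff_seqProd_eq_zero (hφ.map_isStarProjection hq),
    ← hφ.map_zero hbij.2 (IsVNEffect.zero M)]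
  exact hφ.seqProd_eq_iff hbij.1 (c := ⟨0, IsVNEffect.zero M⟩)
    (p.2.seqProd_of_isStarProjection hp q.2)

end PreservesSeqProd

end Effects

/-- A sequential isomorphism between von Neumann algebra effect sets maps projections to
projections and preserves order and orthogonality of projections in both directions;
in particular it fixes `0` and `1`. -/
theorem sequentialIso_projections
    {H K : Type*} [NormedAddCommGroup H] [InnerProductSpace ℂ H] [CompleteSpace H]
    [NormedAddCommGroup K] [InnerProductSpace ℂ K] [CompleteSpace K]
    (M : VonNeumannAlgebra H) (N : VonNeumannAlgebra K)
    (φ : {a : H →L[ℂ] H // IsVNEffect M a} → {b : K →L[ℂ] K // IsVNEffect N b})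
    (hbij : Function.Bijective φ)
    (hseq : ∀ (a b : {a : H →L[ℂ] H // IsVNEffect M a})
        (h : IsVNEffect M (CFC.sqrt (a : H →L[ℂ] H) * (b : H →L[ℂ] H) * CFC.sqrt (a : H →L[ℂ] H))),
      (φ ⟨CFC.sqrt (a : H →L[ℂ] H) * (b : H →L[ℂ] H) * CFC.sqrt (a : H →L[ℂ] H), h⟩ : K →L[ℂ] K)
        = CFC.sqrt (φ a : K →L[ℂ] K) * (φ b : K →L[ℂ] K) * CFC.sqrt (φ a : K →L[ℂ] K)) :
    (∀ p : {a : H →L[ℂ] H // IsVNEffect M a},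
        IsProjOp (p : H →L[ℂ] H) → IsProjOp (φ p : K →L[ℂ] K)) ∧
    (∀ p q : {a : H →L[ℂ] H // IsVNEffect M a},
        IsProjOp (p : H →L[ℂ] H) → IsProjOp (q : H →L[ℂ] H) →
        ((p : H →L[ℂ] H) ≤ (q : H →L[ℂ] H) ↔ (φ p : K →L[ℂ] K) ≤ (φ q : K →L[ℂ] K))) ∧
    (∀ p q : {a : H →L[ℂ] H // IsVNEffect M a},
        IsProjOp (p : H →L[ℂ] H) → IsProjOp (q : H →L[ℂ] H) →
        ((p : H →L[ℂ] H) * (q : H →L[ℂ] H) = 0 ↔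
          (φ p : K →L[ℂ] K) * (φ q : K →L[ℂ] K) = 0)) ∧
    (∀ h0 : IsVNEffect M 0, (φ ⟨0, h0⟩ : K →L[ℂ] K) = 0) ∧
    (∀ h1 : IsVNEffect M 1, (φ ⟨1, h1⟩ : K →L[ℂ] K) = 1) := by
  have hφ : PreservesSeqProd φ := hseq
  simp only [isProjOp_iff_isStarProjection]
  exact ⟨fun p hp ↦ hφ.map_isStarProjection hp,
    fun p q hp hq ↦ hφ.le_iff_of_isStarProjection hbij.1 hp hq,
    fun p q hp hq ↦ hφ.mul_eq_zero_iff_of_isStarProjection hbij hp hq,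
    hφ.map_zero hbij.2, hφ.map_one hbij.2⟩
end

section
/- Let φ : E(𝒜) → E(ℬ) be a sequential isomorphism between effect sets of von Neumann algebras. Then φ preserves commutativity in both directions: for A, B ∈ E(𝒜), AB = BA if and only if φ(A)φ(B) = φ(B)φ(A). Consequently φ maps the central effects E(Z(𝒜)) bijectively onto E(Z(ℬ)). -/
set_option synthInstance.maxHeartbeats 1000000
set_option maxHeartbeats 1000000

/-!
Write `a ∘ b = √a b √a`. Since `φ` is injective and turns `a ∘ b` and `b ∘ a` into `φa ∘ φb` and
`φb ∘ φa`, it suffices that `a ∘ b = b ∘ a ↔ ab = ba` for positive `a, b` (Gudder–Nagy). For the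
nontrivial direction put `s = √a`, `t = √b`: the hypothesis `s t² s = t s² t` says that `st` is
normal, and `s (st)* = (st) s`, so Fuglede–Putnam gives `s (st) = (st)* s`, i.e. `s²` commutes
with `t`. For the centre, the effects of a von Neumann algebra span it, so commuting with `M` is
the same as commuting with every effect of `M`, and `φ` is a bijection between effects.
-/

section SequentialProduct

variable {A : Type*} [CStarAlgebra A]

lemma commute_mul_self_of_mul_mul_self_mul_eq {s t : A} (hs : IsSelfAdjoint s)
    (ht : IsSelfAdjoint t) (h : s * (t * t) * s = t * (s * s) * t) :
    Commute (s * s) (t * t) := by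
  have hstar : star (s * t) = t * s := by rw [star_mul, hs.star_eq, ht.star_eq]
  have hnormal : IsStarNormal (s * t) := by
    refine ⟨?_⟩
    rw [hstar, Commute, SemiconjBy]
    simpa only [mul_assoc] using h.symm
  have hsemi : SemiconjBy s (star (s * t)) (s * t) := by
    rw [hstar, SemiconjBy]; simp only [mul_assoc]
  have hst : Commute (s * s) t := by
    have := hsemi.star_right hnormal.star hnormal
    rw [star_star, hstar, SemiconjBy] at this
    rw [Commute, SemiconjBy]
    simpa only [mul_assoc] using this
  exact hst.mul_right hst

variable [PartialOrder A] [StarOrderedRing A]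

lemma Commute.sqrt_mul_mul_sqrt_eq_mul {a b : A} (ha : 0 ≤ a) (h : Commute a b) :
    CFC.sqrt a * b * CFC.sqrt a = a * b := by
  have hb : Commute (CFC.sqrt a) b := by
    rw [CFC.sqrt_eq_cfc]
    exact h.cfc_nnreal _
  rw [mul_assoc, ← hb.eq, ← mul_assoc, CFC.sqrt_mul_sqrt_self a ha]

theorem sqrt_mul_mul_sqrt_eq_iff_commute {a b : A} (ha : 0 ≤ a) (hb : 0 ≤ b) :
    CFC.sqrt a * b * CFC.sqrt a = CFC.sqrt b * a * CFC.sqrt b ↔ Commute a b := by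
  refine ⟨fun h => ?_, fun h => ?_⟩
  · have hs := IsSelfAdjoint.of_nonneg (CFC.sqrt_nonneg a)
    have ht := IsSelfAdjoint.of_nonneg (CFC.sqrt_nonneg b)
    have := commute_mul_self_of_mul_mul_self_mul_eq hs ht
      (by rwa [CFC.sqrt_mul_sqrt_self a ha, CFC.sqrt_mul_sqrt_self b hb])
    rwa [CFC.sqrt_mul_sqrt_self a ha, CFC.sqrt_mul_sqrt_self b hb] at this
  · rw [h.sqrt_mul_mul_sqrt_eq_mul ha, h.symm.sqrt_mul_mul_sqrt_eq_mul hb, h.eq]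

end SequentialProduct

open scoped ComplexStarModule

namespace VonNeumannAlgebra

variable {H : Type*} [NormedAddCommGroup H] [InnerProductSpace ℂ H] [CompleteSpace H]
  (M : VonNeumannAlgebra H)

theorem isClosed : IsClosed (M : Set (H →L[ℂ] H)) := by
  rw [← M.centralizer_centralizer]
  exact Set.isClosed_centralizer _

lemma cfcₙ_mem (f : ℝ → ℝ) {a : H →L[ℂ] H} (ha : a ∈ M) : cfcₙ f a ∈ M :=
  have : IsClosed (M.toStarSubalgebra : Set (H →L[ℂ] H)) := M.isClosed
  _root_.cfcₙ_mem (s := M.toStarSubalgebra) (𝕜' := ℂ) f ha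

lemma real_smul_mem (c : ℝ) {a : H →L[ℂ] H} (ha : a ∈ M) : c • a ∈ M := by
  rw [← Complex.coe_smul]
  exact M.toStarSubalgebra.smul_mem ha _

lemma sqrt_mem {a : H →L[ℂ] H} (ha : a ∈ M) (ha₀ : 0 ≤ a) : CFC.sqrt a ∈ M := by
  rw [CFC.sqrt_eq_real_sqrt a ha₀]
  exact M.cfcₙ_mem _ ha

lemma isVNEffect_sqrt_mul_mul_sqrt {a b : H →L[ℂ] H} (ha : IsVNEffect M a)
    (hb : IsVNEffect M b) : IsVNEffect M (CFC.sqrt a * b * CFC.sqrt a) := by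
  obtain ⟨haM, ha₀, ha₁⟩ := ha
  obtain ⟨hbM, hb₀, hb₁⟩ := hb
  have hs := IsSelfAdjoint.of_nonneg (CFC.sqrt_nonneg a)
  refine ⟨mul_mem (mul_mem (M.sqrt_mem haM ha₀) hbM) (M.sqrt_mem haM ha₀),
    hs.conjugate_nonneg hb₀, ?_⟩
  calc CFC.sqrt a * b * CFC.sqrt a ≤ CFC.sqrt a * 1 * CFC.sqrt a := hs.conjugate_le_conjugate hb₁
    _ = a := by rw [mul_one, CFC.sqrt_mul_sqrt_self a ha₀]
    _ ≤ 1 := ha₁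

lemma isVNEffect_norm_inv_smul {p : H →L[ℂ] H} (hpM : p ∈ M) (hp : 0 ≤ p) :
    IsVNEffect M (‖p‖⁻¹ • p) := by
  refine ⟨M.real_smul_mem _ hpM, smul_nonneg (by positivity) hp, ?_⟩
  rw [← CStarAlgebra.norm_le_one_iff_of_nonneg _ (smul_nonneg (by positivity) hp), norm_smul,
    norm_inv, norm_norm]
  exact inv_mul_le_one_of_le₀ le_rfl (norm_nonneg p)

lemma commute_of_nonneg_of_forall_isVNEffect {a p : H →L[ℂ] H}
    (h : ∀ e, IsVNEffect M e → Commute e a) (hpM : p ∈ M) (hp : 0 ≤ p) : Commute p a := by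
  rcases eq_or_ne p 0 with rfl | hp₀
  · exact Commute.zero_left a
  rw [← smul_inv_smul₀ (norm_ne_zero_iff.mpr hp₀) p]
  exact (h _ (M.isVNEffect_norm_inv_smul hpM hp)).smul_left _

-- Every element of `M` is a combination of four positive elements of `M`, which rescale to effects.
lemma forall_mem_commute_iff_forall_isVNEffect {a : H →L[ℂ] H} :
    (∀ x ∈ M, Commute x a) ↔ ∀ e : {e // IsVNEffect M e}, Commute (e : H →L[ℂ] H) a := by
  refine ⟨fun h e => h e e.2.1, fun h x hx => ?_⟩
  have hre : (ℜ x : H →L[ℂ] H) ∈ M := by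
    rw [realPart_apply_coe]
    exact M.real_smul_mem _ (add_mem hx (star_mem hx))
  have him : (ℑ x : H →L[ℂ] H) ∈ M := by
    rw [imaginaryPart_apply_coe]
    exact M.toStarSubalgebra.smul_mem (M.real_smul_mem _ (sub_mem hx (star_mem hx))) _
  have key {y : H →L[ℂ] H} (hy : y ∈ M) : Commute y⁺ a ∧ Commute y⁻ a :=
    ⟨M.commute_of_nonneg_of_forall_isVNEffect (fun e he => h ⟨e, he⟩) (M.cfcₙ_mem _ hy)
        (CFC.posPart_nonneg y),
      M.commute_of_nonneg_of_forall_isVNEffect (fun e he => h ⟨e, he⟩) (M.cfcₙ_mem _ hy)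
        (CFC.negPart_nonneg y)⟩
  rw [← CStarAlgebra.linear_combination_nonneg x]
  exact (((key hre).1.sub_left (key hre).2).add_left
    (((key him).1.smul_left _).sub_left ((key him).2.smul_left _)))

end VonNeumannAlgebra

/-- A sequential isomorphism between von Neumann algebra effect sets preserves
commutativity in both directions; consequently it maps central effects to central
effects in both directions. -/
theorem sequentialIso_preserves_commutativity
    {H K : Type*} [NormedAddCommGroup H] [InnerProductSpace ℂ H] [CompleteSpace H]
    [NormedAddCommGroup K] [InnerProductSpace ℂ K] [CompleteSpace K]
    (M : VonNeumannAlgebra H) (N : VonNeumannAlgebra K)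
    (φ : {a : H →L[ℂ] H // IsVNEffect M a} → {b : K →L[ℂ] K // IsVNEffect N b})
    (hbij : Function.Bijective φ)
    (hseq : ∀ (a b : {a : H →L[ℂ] H // IsVNEffect M a})
        (h : IsVNEffect M (CFC.sqrt (a : H →L[ℂ] H) * (b : H →L[ℂ] H) * CFC.sqrt (a : H →L[ℂ] H))),
      (φ ⟨CFC.sqrt (a : H →L[ℂ] H) * (b : H →L[ℂ] H) * CFC.sqrt (a : H →L[ℂ] H), h⟩ : K →L[ℂ] K)
        = CFC.sqrt (φ a : K →L[ℂ] K) * (φ b : K →L[ℂ] K) * CFC.sqrt (φ a : K →L[ℂ] K)) :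
    (∀ a b : {a : H →L[ℂ] H // IsVNEffect M a},
      (a : H →L[ℂ] H) * (b : H →L[ℂ] H) = (b : H →L[ℂ] H) * (a : H →L[ℂ] H) ↔
        (φ a : K →L[ℂ] K) * (φ b : K →L[ℂ] K) = (φ b : K →L[ℂ] K) * (φ a : K →L[ℂ] K)) ∧
    (∀ a : {a : H →L[ℂ] H // IsVNEffect M a},
      (∀ x ∈ M, x * (a : H →L[ℂ] H) = (a : H →L[ℂ] H) * x) ↔
        (∀ y ∈ N, y * (φ a : K →L[ℂ] K) = (φ a : K →L[ℂ] K) * y)) := by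
  have commute_iff (a b : {a : H →L[ℂ] H // IsVNEffect M a}) :
      Commute (a : H →L[ℂ] H) b ↔ Commute (φ a : K →L[ℂ] K) (φ b) := by
    rw [← sqrt_mul_mul_sqrt_eq_iff_commute a.2.2.1 b.2.2.1,
      ← sqrt_mul_mul_sqrt_eq_iff_commute (φ a).2.2.1 (φ b).2.2.1,
      ← hseq a b (M.isVNEffect_sqrt_mul_mul_sqrt a.2 b.2),
      ← hseq b a (M.isVNEffect_sqrt_mul_mul_sqrt b.2 a.2), ← Subtype.ext_iff, hbij.1.eq_iff,
      Subtype.mk.injEq]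
  refine ⟨commute_iff, fun a => ?_⟩
  change (∀ x ∈ M, Commute x (a : H →L[ℂ] H)) ↔ ∀ y ∈ N, Commute y (φ a : K →L[ℂ] K)
  rw [M.forall_mem_commute_iff_forall_isVNEffect, N.forall_mem_commute_iff_forall_isVNEffect,
    hbij.2.forall]
  exact forall_congr' fun b => commute_iff b a
end

section
/- Let φ : E(𝒜) → E(ℬ) be a sequential isomorphism between effect sets of von Neumann algebras, let Z, Z' ∈ E(𝒜) be central, and let P, P' ∈ 𝒜 be mutually orthogonal projections whose images satisfy φ(P + P') = φ(P) + φ(P'). Then ZP + Z'P' ∈ E(𝒜) and φ(ZP + Z'P') = φ(ZP) + φ(Z'P'). -/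
set_option synthInstance.maxHeartbeats 1000000
set_option maxHeartbeats 1000000

/-!
Write `S = Z P + Z' P'`. Since `Z, Z'` are central and `P P' = P' P = 0`, we have
`P S = S P = Z P` and `P' S = S P' = Z' P'`, so `S^{1/2}` commutes with `P` and `P'` and
`S^{1/2} P S^{1/2} = Z P`, `S^{1/2} P' S^{1/2} = Z' P'`, `S^{1/2} (P + P') S^{1/2} = S`.
Applying `φ` to these three sequential products and using `φ(P + P') = φ(P) + φ(P')` gives
`φ(S) = φ(S)^{1/2} (φ(P) + φ(P')) φ(S)^{1/2} = φ(Z P) + φ(Z' P')`.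
-/

open CFC

lemma IsStarProjection.mul_le_of_commute_of_le_one {R : Type*} [Ring R] [StarRing R]
    [PartialOrder R] [StarOrderedRing R] {p z : R} (hp : IsStarProjection p)
    (hpz : Commute p z) (hz : z ≤ 1) : z * p ≤ p := by
  have h := hp.isSelfAdjoint.conjugate_le_conjugate hz
  rwa [mul_one, hp.isIdempotentElem.eq, hpz.eq, mul_assoc, hp.isIdempotentElem.eq] at h

lemma IsSelfAdjoint.mul_eq_zero_comm {R : Type*} [NonUnitalSemiring R] [StarRing R] {p q : R}
    (hp : IsSelfAdjoint p) (hq : IsSelfAdjoint q) (h : p * q = 0) : q * p = 0 := by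
  simpa [hp.star_eq, hq.star_eq] using congrArg star h

section CStarAlgebra

variable {A : Type*} [CStarAlgebra A] [PartialOrder A] [StarOrderedRing A]

lemma CFC.sqrt_mul_mul_sqrt_of_commute {s p : A} (hs : 0 ≤ s) (h : Commute s p) :
    sqrt s * p * sqrt s = p * s := by
  have hsqrt : Commute (sqrt s) p := sqrt_eq_cfc (a := s) ▸ h.cfc_nnreal NNReal.sqrt
  rw [hsqrt.eq, mul_assoc, sqrt_mul_sqrt_self s hs]

lemma CFC.sqrt_mul_mul_sqrt_of_orthogonal {p q z z' : A} (hs : 0 ≤ z * p + z' * q)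
    (hp : IsIdempotentElem p) (hpq : p * q = 0) (hqp : q * p = 0)
    (hpz : Commute p z) (hpz' : Commute p z') :
    sqrt (z * p + z' * q) * p * sqrt (z * p + z' * q) = z * p := by
  have hleft : p * (z * p + z' * q) = z * p := by
    rw [mul_add, ← mul_assoc, ← mul_assoc, hpz.eq, hpz'.eq, mul_assoc, hp.eq, mul_assoc, hpq,
      mul_zero, add_zero]
  have hright : (z * p + z' * q) * p = z * p := by
    rw [add_mul, mul_assoc, hp.eq, mul_assoc, hqp, mul_zero, add_zero]
  rw [sqrt_mul_mul_sqrt_of_commute hs (hright.trans hleft.symm), hleft]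

end CStarAlgebra

section SequentialProduct

variable {H K : Type*} [NormedAddCommGroup H] [InnerProductSpace ℂ H] [CompleteSpace H]
  [NormedAddCommGroup K] [InnerProductSpace ℂ K] [CompleteSpace K]
  {M : VonNeumannAlgebra H} {N : VonNeumannAlgebra K}

def PreservesSequentialProduct
    (φ : {a : H →L[ℂ] H // IsVNEffect M a} → {b : K →L[ℂ] K // IsVNEffect N b}) : Prop :=
  ∀ (a b : {a : H →L[ℂ] H // IsVNEffect M a}) (h : IsVNEffect M (sqrt a.1 * b.1 * sqrt a.1)),
    (φ ⟨sqrt a.1 * b.1 * sqrt a.1, h⟩).1 = sqrt (φ a).1 * (φ b).1 * sqrt (φ a).1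

lemma PreservesSequentialProduct.coe_apply_of_eq
    {φ : {a : H →L[ℂ] H // IsVNEffect M a} → {b : K →L[ℂ] K // IsVNEffect N b}}
    (hφ : PreservesSequentialProduct φ) {a b c : {a : H →L[ℂ] H // IsVNEffect M a}}
    (h : sqrt a.1 * b.1 * sqrt a.1 = c) :
    (φ c).1 = sqrt (φ a).1 * (φ b).1 * sqrt (φ a).1 := by
  obtain ⟨c, hc⟩ := c
  subst h
  exact hφ a b hc

end SequentialProduct

theorem sequentialIso_additive_on_central_multiples_general
    {H K : Type*} [NormedAddCommGroup H] [InnerProductSpace ℂ H] [CompleteSpace H]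
    [NormedAddCommGroup K] [InnerProductSpace ℂ K] [CompleteSpace K]
    (M : VonNeumannAlgebra H) (N : VonNeumannAlgebra K)
    (φ : {a : H →L[ℂ] H // IsVNEffect M a} → {b : K →L[ℂ] K // IsVNEffect N b})
    (hseq : ∀ (a b : {a : H →L[ℂ] H // IsVNEffect M a})
        (h : IsVNEffect M (CFC.sqrt (a : H →L[ℂ] H) * (b : H →L[ℂ] H) * CFC.sqrt (a : H →L[ℂ] H))),
      (φ ⟨CFC.sqrt (a : H →L[ℂ] H) * (b : H →L[ℂ] H) * CFC.sqrt (a : H →L[ℂ] H), h⟩ : K →L[ℂ] K)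
        = CFC.sqrt (φ a : K →L[ℂ] K) * (φ b : K →L[ℂ] K) * CFC.sqrt (φ a : K →L[ℂ] K))
    (Z Z' P P' : {a : H →L[ℂ] H // IsVNEffect M a})
    (hZ : ∀ x ∈ M, x * (Z : H →L[ℂ] H) = (Z : H →L[ℂ] H) * x)
    (hZ' : ∀ x ∈ M, x * (Z' : H →L[ℂ] H) = (Z' : H →L[ℂ] H) * x)
    (hP2 : (P : H →L[ℂ] H) * (P : H →L[ℂ] H) = P)
    (hP'2 : (P' : H →L[ℂ] H) * (P' : H →L[ℂ] H) = P')
    (horth : (P : H →L[ℂ] H) * (P' : H →L[ℂ] H) = 0)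
    (hPP' : IsVNEffect M ((P : H →L[ℂ] H) + (P' : H →L[ℂ] H)))
    (hφadd : (φ ⟨(P : H →L[ℂ] H) + (P' : H →L[ℂ] H), hPP'⟩ : K →L[ℂ] K)
      = (φ P : K →L[ℂ] K) + (φ P' : K →L[ℂ] K))
    (hZP : IsVNEffect M ((Z : H →L[ℂ] H) * (P : H →L[ℂ] H)))
    (hZ'P' : IsVNEffect M ((Z' : H →L[ℂ] H) * (P' : H →L[ℂ] H))) :
    ∃ hsum : IsVNEffect M ((Z : H →L[ℂ] H) * (P : H →L[ℂ] H)
        + (Z' : H →L[ℂ] H) * (P' : H →L[ℂ] H)),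
      (φ ⟨(Z : H →L[ℂ] H) * (P : H →L[ℂ] H) + (Z' : H →L[ℂ] H) * (P' : H →L[ℂ] H), hsum⟩
          : K →L[ℂ] K)
        = (φ ⟨(Z : H →L[ℂ] H) * (P : H →L[ℂ] H), hZP⟩ : K →L[ℂ] K)
          + (φ ⟨(Z' : H →L[ℂ] H) * (P' : H →L[ℂ] H), hZ'P'⟩ : K →L[ℂ] K) := by
  have hφ : PreservesSequentialProduct φ := hseq
  have hPproj : IsStarProjection (P : H →L[ℂ] H) := ⟨hP2, P.2.2.1.isSelfAdjoint⟩
  have hP'proj : IsStarProjection (P' : H →L[ℂ] H) := ⟨hP'2, P'.2.2.1.isSelfAdjoint⟩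
  have horth' := hPproj.isSelfAdjoint.mul_eq_zero_comm hP'proj.isSelfAdjoint horth
  have hPZ : Commute (P : H →L[ℂ] H) Z := hZ P P.2.1
  have hP'Z' : Commute (P' : H →L[ℂ] H) Z' := hZ' P' P'.2.1
  have hsum : IsVNEffect M ((Z : H →L[ℂ] H) * P + Z' * P') :=
    ⟨add_mem hZP.1 hZ'P'.1, add_nonneg hZP.2.1 hZ'P'.2.1,
      (add_le_add (hPproj.mul_le_of_commute_of_le_one hPZ Z.2.2.2)
        (hP'proj.mul_le_of_commute_of_le_one hP'Z' Z'.2.2.2)).trans hPP'.2.2⟩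
  refine ⟨hsum, ?_⟩
  set S : H →L[ℂ] H := Z * P + Z' * P' with hS
  have hSP : sqrt S * P * sqrt S = Z * P :=
    sqrt_mul_mul_sqrt_of_orthogonal hsum.2.1 hP2 horth horth' hPZ (hZ' P P.2.1)
  have hSP' : sqrt S * P' * sqrt S = Z' * P' := by
    rw [hS, add_comm]
    exact sqrt_mul_mul_sqrt_of_orthogonal (by rw [add_comm]; exact hsum.2.1) hP'2 horth' horth hP'Z'
      (hZ P' P'.2.1)
  let Seff : {a : H →L[ℂ] H // IsVNEffect M a} := ⟨S, hsum⟩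
  have hSPP' : sqrt S * (P + P') * sqrt S = S := by rw [mul_add, add_mul, hSP, hSP']
  rw [hφ.coe_apply_of_eq (a := Seff) (b := ⟨_, hPP'⟩) hSPP', hφadd, mul_add, add_mul,
    ← hφ.coe_apply_of_eq (a := Seff) (c := ⟨_, hZP⟩) hSP,
    ← hφ.coe_apply_of_eq (a := Seff) (c := ⟨_, hZ'P'⟩) hSP']

/-- Orthoadditivity on central multiples of orthogonal projections: if `Z, Z'` are central
effects and `P, P'` mutually orthogonal projections with `φ(P + P') = φ(P) + φ(P')`,
then `Z P + Z' P'` is an effect and `φ(Z P + Z' P') = φ(Z P) + φ(Z' P')`. -/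
theorem sequentialIso_additive_on_central_multiples
    {H K : Type*} [NormedAddCommGroup H] [InnerProductSpace ℂ H] [CompleteSpace H]
    [NormedAddCommGroup K] [InnerProductSpace ℂ K] [CompleteSpace K]
    (M : VonNeumannAlgebra H) (N : VonNeumannAlgebra K)
    (φ : {a : H →L[ℂ] H // IsVNEffect M a} → {b : K →L[ℂ] K // IsVNEffect N b})
    (hbij : Function.Bijective φ)
    (hseq : ∀ (a b : {a : H →L[ℂ] H // IsVNEffect M a})
        (h : IsVNEffect M (CFC.sqrt (a : H →L[ℂ] H) * (b : H →L[ℂ] H) * CFC.sqrt (a : H →L[ℂ] H))),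
      (φ ⟨CFC.sqrt (a : H →L[ℂ] H) * (b : H →L[ℂ] H) * CFC.sqrt (a : H →L[ℂ] H), h⟩ : K →L[ℂ] K)
        = CFC.sqrt (φ a : K →L[ℂ] K) * (φ b : K →L[ℂ] K) * CFC.sqrt (φ a : K →L[ℂ] K))
    (Z Z' P P' : {a : H →L[ℂ] H // IsVNEffect M a})
    (hZ : ∀ x ∈ M, x * (Z : H →L[ℂ] H) = (Z : H →L[ℂ] H) * x)
    (hZ' : ∀ x ∈ M, x * (Z' : H →L[ℂ] H) = (Z' : H →L[ℂ] H) * x)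
    (hP : IsSelfAdjoint (P : H →L[ℂ] H)) (hP2 : (P : H →L[ℂ] H) * (P : H →L[ℂ] H) = P)
    (hP' : IsSelfAdjoint (P' : H →L[ℂ] H)) (hP'2 : (P' : H →L[ℂ] H) * (P' : H →L[ℂ] H) = P')
    (horth : (P : H →L[ℂ] H) * (P' : H →L[ℂ] H) = 0)
    (hPP' : IsVNEffect M ((P : H →L[ℂ] H) + (P' : H →L[ℂ] H)))
    (hφadd : (φ ⟨(P : H →L[ℂ] H) + (P' : H →L[ℂ] H), hPP'⟩ : K →L[ℂ] K)
      = (φ P : K →L[ℂ] K) + (φ P' : K →L[ℂ] K))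
    (hZP : IsVNEffect M ((Z : H →L[ℂ] H) * (P : H →L[ℂ] H)))
    (hZ'P' : IsVNEffect M ((Z' : H →L[ℂ] H) * (P' : H →L[ℂ] H))) :
    ∃ hsum : IsVNEffect M ((Z : H →L[ℂ] H) * (P : H →L[ℂ] H)
        + (Z' : H →L[ℂ] H) * (P' : H →L[ℂ] H)),
      (φ ⟨(Z : H →L[ℂ] H) * (P : H →L[ℂ] H) + (Z' : H →L[ℂ] H) * (P' : H →L[ℂ] H), hsum⟩
          : K →L[ℂ] K)
        = (φ ⟨(Z : H →L[ℂ] H) * (P : H →L[ℂ] H), hZP⟩ : K →L[ℂ] K)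
          + (φ ⟨(Z' : H →L[ℂ] H) * (P' : H →L[ℂ] H), hZ'P'⟩ : K →L[ℂ] K) :=
  sequentialIso_additive_on_central_multiples_general M N φ hseq Z Z' P P' hZ hZ' hP2 hP'2 horth
    hPP' hφadd hZP hZ'P'
end
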